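/- arXiv:2106.15351 — 2 statements merged into one kernel-verified Lean document; each statement's English description precedes it below -/
import Mathlib

section
/- Let G be a string over the four-letter alphabet Fin 4 and suppose α is a hapax of G, i.e. mult_G(α) = 1. Then there exist at least three distinct strings of length |α| + 1 over Fin 4 that do not occur in G. In particular, the minimal forbidden length of G is at most the minimal hapax length of G plus 1. -/
/-!
Every occurrence of `α ++ [a]` in `G` starts with an occurrence of `α` at the same position, and
the letter `a` is the one read in `G` right after it. A hapax has a single occurrence, so at most
one letter extends it inside `G`; the other three extensions are forbidden.
-/

/-- The multiplicity of `α` in `G`: the number of positions `i` such that the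
contiguous substring of `G` of length `|α|` starting at `i` equals `α`. -/
def mult {A : Type*} [DecidableEq A] (G α : List A) : ℕ :=
  ((Finset.range (G.length + 1)).filter
    (fun i => i + α.length ≤ G.length ∧ (G.drop i).take α.length = α)).card

section

open List

variable {A : Type*} [DecidableEq A]

lemma mult_eq_card_filter_isPrefix (G α : List A) :
    mult G α = ((Finset.range (G.length + 1)).filter (fun i => α <+: G.drop i)).card := by
  unfold mult
  congr 1
  refine Finset.filter_congr fun i hi => ?_
  rw [Finset.mem_range] at hi
  rw [prefix_iff_eq_take, eq_comm (a := α)]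
  refine ⟨And.right, fun h => ⟨?_, h⟩⟩
  have := (prefix_iff_eq_take.mpr h.symm).length_le
  rw [length_drop] at this
  omega

lemma exists_isPrefix_drop_of_mult_ne_zero {G α : List A} (h : mult G α ≠ 0) :
    ∃ i ≤ G.length, α <+: G.drop i := by
  rw [mult_eq_card_filter_isPrefix] at h
  obtain ⟨i, hi⟩ := Finset.card_ne_zero.mp h
  rw [Finset.mem_filter, Finset.mem_range] at hi
  exact ⟨i, Nat.lt_succ_iff.mp hi.1, hi.2⟩

lemma eq_of_mult_le_one_of_mult_append_ne_zero {G α : List A} {a b : A} (hα : mult G α ≤ 1)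
    (ha : mult G (α ++ [a]) ≠ 0) (hb : mult G (α ++ [b]) ≠ 0) : a = b := by
  obtain ⟨i, hiG, hi⟩ := exists_isPrefix_drop_of_mult_ne_zero ha
  obtain ⟨j, hjG, hj⟩ := exists_isPrefix_drop_of_mult_ne_zero hb
  have hij : i = j := by
    rw [mult_eq_card_filter_isPrefix] at hα
    refine Finset.card_le_one.mp hα i ?_ j ?_ <;> rw [Finset.mem_filter, Finset.mem_range]
    · exact ⟨Nat.lt_succ_of_le hiG, (prefix_append α [a]).trans hi⟩
    · exact ⟨Nat.lt_succ_of_le hjG, (prefix_append α [b]).trans hj⟩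
  subst hij
  have hab : α ++ [a] = α ++ [b] :=
    (prefix_of_prefix_length_le hi hj (by simp)).eq_of_length (by simp)
  exact singleton_inj.mp (append_cancel_left hab)

lemma card_sub_one_le_card_filter_mult_append_eq_zero [Fintype A] {G α : List A}
    (hα : mult G α ≤ 1) :
    Fintype.card A - 1 ≤ (Finset.univ.filter fun a => mult G (α ++ [a]) = 0).card := by
  have hocc : (Finset.univ.filter fun a => ¬ mult G (α ++ [a]) = 0).card ≤ 1 :=
    Finset.card_le_one.mpr fun a ha b hb =>
      eq_of_mult_le_one_of_mult_append_ne_zero hα (Finset.mem_filter.mp ha).2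
        (Finset.mem_filter.mp hb).2
  have hsplit := Finset.card_filter_add_card_filter_not
    (s := (Finset.univ : Finset A)) fun a => mult G (α ++ [a]) = 0
  rw [Finset.card_univ] at hsplit
  omega

end

/-- If `α` is a hapax of `G` over the four-letter alphabet, then there are at
least three distinct strings of length `|α| + 1` that do not occur in `G`;
in particular the minimal forbidden length of `G` is at most `|α| + 1`
(hence at most the minimal hapax length plus one). -/
theorem hapax_gives_three_forbidden (G α : List (Fin 4))
    (hhapax : mult G α = 1) :
    (∃ β₁ β₂ β₃ : List (Fin 4),
        β₁ ≠ β₂ ∧ β₁ ≠ β₃ ∧ β₂ ≠ β₃ ∧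
        β₁.length = α.length + 1 ∧ β₂.length = α.length + 1 ∧
        β₃.length = α.length + 1 ∧
        mult G β₁ = 0 ∧ mult G β₂ = 0 ∧ mult G β₃ = 0) ∧
      sInf {k : ℕ | ∃ β : List (Fin 4), β.length = k ∧ mult G β = 0} ≤
        α.length + 1 := by
  have hthree : 2 < (Finset.univ.filter fun a : Fin 4 => mult G (α ++ [a]) = 0).card := by
    have := card_sub_one_le_card_filter_mult_append_eq_zero hhapax.le
    rw [Fintype.card_fin] at this
    omega
  obtain ⟨a, b, c, ha, hb, hc, hab, hac, hbc⟩ := Finset.two_lt_card_iff.mp hthree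
  simp only [Finset.mem_filter, Finset.mem_univ, true_and] at ha hb hc
  refine ⟨⟨α ++ [a], α ++ [b], α ++ [c], ?_, ?_, ?_, by simp, by simp, by simp, ha, hb, hc⟩,
    Nat.sInf_le ⟨α ++ [a], by simp, ha⟩⟩ <;> simpa
end

section
/- Let G be a string over a finite alphabet and let k ≥ 2 with k ≤ |G|. Suppose every string of length k − 1 occurring in G is a hapax of G (in particular this holds whenever k ≥ mrl(G) + 2, where mrl(G) is the maximal repeat length). Then G is k-univocal: every string G' over the same alphabet having the same k-spectrum as G (i.e. mult_{G'}(α) = mult_G(α) for all strings α of length k) is equal to G. -/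
open List

section

variable {A : Type*}

theorem List.isInfix_iff_exists_prefix_drop {α G : List A} :
    α <:+: G ↔ ∃ i ≤ G.length, α <+: G.drop i := by
  refine ⟨fun h => ?_, fun ⟨i, _, h⟩ => h.isInfix.trans (drop_suffix i G).isInfix⟩
  obtain ⟨t, hαt, htG⟩ := infix_iff_prefix_suffix.1 h
  exact ⟨G.length - t.length, Nat.sub_le _ _, suffix_iff_eq_drop.1 htG ▸ hαt⟩

variable [DecidableEq A]

def occurrences (G α : List A) : Finset ℕ :=
  (Finset.range (G.length + 1)).filter
    (fun i => i + α.length ≤ G.length ∧ (G.drop i).take α.length = α)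

theorem mult_eq_card_occurrences (G α : List A) : mult G α = (occurrences G α).card := rfl

theorem mem_occurrences {G α : List A} {i : ℕ} :
    i ∈ occurrences G α ↔ i ≤ G.length ∧ α <+: G.drop i := by
  simp only [occurrences, Finset.mem_filter, Finset.mem_range, prefix_iff_eq_take]
  constructor
  · rintro ⟨hi, -, h⟩
    exact ⟨by omega, h.symm⟩
  · rintro ⟨hi, h⟩
    have hlen := congrArg List.length h
    simp only [length_take, length_drop] at hlen
    exact ⟨by omega, by omega, h.symm⟩

theorem mult_pos_iff_isInfix {G α : List A} : 0 < mult G α ↔ α <:+: G := by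
  simp only [mult_eq_card_occurrences, Finset.card_pos, Finset.Nonempty, mem_occurrences,
    isInfix_iff_exists_prefix_drop]

theorem eq_of_mult_le_one {G α : List A} {i j : ℕ} (h : mult G α ≤ 1)
    (hi : i ≤ G.length) (hj : j ≤ G.length) (hαi : α <+: G.drop i) (hαj : α <+: G.drop j) :
    i = j :=
  Finset.card_le_one.1 h i (mem_occurrences.2 ⟨hi, hαi⟩) j (mem_occurrences.2 ⟨hj, hαj⟩)

theorem mult_le_mult_of_isInfix {G G' : List A} (h : G' <:+: G) (α : List A) :
    mult G' α ≤ mult G α := by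
  obtain ⟨s, t, rfl⟩ := h
  refine Finset.card_le_card_of_injOn (· + s.length) (fun i hi => ?_)
    (fun i _ j _ hij => Nat.add_right_cancel hij)
  obtain ⟨hi, hα⟩ := mem_occurrences.1 hi
  refine mem_occurrences.2 ⟨by simp; omega, ?_⟩
  show α <+: drop (i + s.length) _
  rw [append_assoc, Nat.add_comm, ← drop_drop, drop_left, drop_append_of_le_length hi]
  exact hα.trans (prefix_append _ _)

theorem exists_prefix_drop_of_windows_isInfix {G : List A} {m : ℕ}
    (huniq : ∀ β : List A, β.length = m → mult G β ≤ 1) :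
    ∀ G' : List A, m + 1 ≤ G'.length →
      (∀ α : List A, α.length = m + 1 → α <:+: G' → α <:+: G) →
      ∃ i ≤ G.length, G' <+: G.drop i
  | [], hlen, _ => by simp at hlen
  | a :: G'', hlen, hocc => by
    rcases Nat.lt_or_ge G''.length (m + 1) with hshort | hlong
    · have hG' : (a :: G'').length = m + 1 := by
        simp only [length_cons] at hlen ⊢; omega
      exact isInfix_iff_exists_prefix_drop.1 (hocc _ hG' (infix_refl _))
    obtain ⟨s, hs, hG''⟩ := exists_prefix_drop_of_windows_isInfix huniq G'' hlong
      fun α hα h => hocc α hα (h.trans (suffix_cons a G'').isInfix)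
    have hfirst : a :: G''.take m <+: a :: G'' := cons_prefix_cons.2 ⟨rfl, take_prefix m G''⟩
    obtain ⟨t, -, hα⟩ :=
      isInfix_iff_exists_prefix_drop.1 (hocc _ (by simp; omega) hfirst.isInfix)
    have ht : t < G.length := by
      have := hα.length_le
      simp only [length_cons, length_drop] at this
      omega
    rw [drop_eq_getElem_cons ht, cons_prefix_cons] at hα
    obtain ⟨rfl, hα⟩ := hα
    have hts : t + 1 = s := eq_of_mult_le_one (huniq (G''.take m) (by simp; omega))
      ht hs hα ((take_prefix m G'').trans hG'')
    refine ⟨t, ht.le, ?_⟩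
    rw [drop_eq_getElem_cons ht, cons_prefix_cons, hts]
    exact ⟨rfl, hG''⟩

end

theorem k_univocal_of_hapax_km1_general {A : Type*} [DecidableEq A]
    (G : List A) (k : ℕ) (hk : 2 ≤ k) (hkn : k ≤ G.length)
    (hhapax : ∀ α : List A, α.length = k - 1 → 1 ≤ mult G α → mult G α = 1) :
    ∀ G' : List A, (∀ α : List A, α.length = k → mult G' α = mult G α) →
      G' = G := by
  intro G' hspec
  obtain ⟨m, rfl⟩ : ∃ m, k = m + 1 := ⟨k - 1, by omega⟩
  have hocc (α : List A) (hα : α.length = m + 1) : α <:+: G' ↔ α <:+: G := by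
    rw [← mult_pos_iff_isInfix, ← mult_pos_iff_isInfix, hspec α hα]
  have huniq (β : List A) (hβ : β.length = m) : mult G β ≤ 1 := by
    rcases Nat.eq_zero_or_pos (mult G β) with h | h
    · omega
    · exact (hhapax β hβ h).le
  have hwindow : (G.take (m + 1)).length = m + 1 := length_take_of_le hkn
  have hlen' : m + 1 ≤ G'.length :=
    hwindow ▸ ((hocc _ hwindow).2 (take_prefix _ G).isInfix).length_le
  have hG'G : G' <:+: G := isInfix_iff_exists_prefix_drop.2 <|
    exists_prefix_drop_of_windows_isInfix huniq G' hlen' fun α hα => (hocc α hα).1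
  have hGG' : G <:+: G' := isInfix_iff_exists_prefix_drop.2 <|
    exists_prefix_drop_of_windows_isInfix
      (fun β hβ => (mult_le_mult_of_isInfix hG'G β).trans (huniq β hβ)) G hkn
      fun α hα => (hocc α hα).2
  exact hG'G.eq_of_length (hG'G.length_le.antisymm hGG'.length_le)

/-- If every string of length `k - 1` occurring in `G` is a hapax of `G`
(which holds in particular when `k ≥ mrl(G) + 2`), then `G` is `k`-univocal:
any string with the same `k`-spectrum as `G` equals `G`. -/
theorem k_univocal_of_hapax_km1 {A : Type*} [Fintype A] [DecidableEq A]
    (G : List A) (k : ℕ) (hk : 2 ≤ k) (hkn : k ≤ G.length)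
    (hhapax : ∀ α : List A, α.length = k - 1 → 1 ≤ mult G α → mult G α = 1) :
    ∀ G' : List A, (∀ α : List A, α.length = k → mult G' α = mult G α) →
      G' = G :=
  k_univocal_of_hapax_km1_general G k hk hkn hhapax
end
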